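/- arXiv:math/0309478 — 5 statements merged into one kernel-verified Lean document; each statement's English description precedes it below -/
import Mathlib

section
/- For all real numbers a ≤ b there exists a constant C > 0 such that for every complex number s with a ≤ Re(s) ≤ b and s ∉ {0, 1}, one has ‖ξ(s) + 1/s + 1/(1−s)‖ ≤ C; that is, the entire function ξ(s) + 1/s + 1/(1−s) is bounded in every vertical strip. -/
/-!
`ξ(s) + 1/s + 1/(1-s)` is half of the Mellin transform, at `s/2`, of the theta function `θ(x)`
corrected near `0` and `∞` so that it decays faster than any power at both ends. On a strip
`a ≤ Re s ≤ b` the Mellin kernel satisfies `|x^(s-1)| ≤ x^(a-1) + x^(b-1)`, so the transform is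
bounded there by one integral that converges for the rapidly decaying function.
-/

open Real Complex Set MeasureTheory Filter Asymptotics Topology

lemma Real.rpow_le_rpow_add_rpow_of_mem_Icc {x a b t : ℝ} (hx : 0 < x) (ht : t ∈ Icc a b) :
    x ^ t ≤ x ^ a + x ^ b := by
  rcases le_total x 1 with hx1 | hx1
  · calc x ^ t ≤ x ^ a := rpow_le_rpow_of_exponent_ge hx hx1 ht.1
      _ ≤ x ^ a + x ^ b := le_add_of_nonneg_right (rpow_nonneg hx.le _)
  · calc x ^ t ≤ x ^ b := rpow_le_rpow_of_exponent_le hx1 ht.2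
      _ ≤ x ^ a + x ^ b := le_add_of_nonneg_left (rpow_nonneg hx.le _)

section Mellin

variable {E : Type*} [NormedAddCommGroup E] [NormedSpace ℂ E]

lemma integrableOn_rpow_mul_norm_of_mellinConvergent {f : ℝ → E} {a : ℝ}
    (hf : MellinConvergent f a) :
    IntegrableOn (fun x : ℝ ↦ x ^ (a - 1) * ‖f x‖) (Ioi 0) := by
  refine hf.norm.congr (ae_restrict_of_forall_mem measurableSet_Ioi fun x (hx : 0 < x) ↦ ?_)
  simp [norm_smul, norm_cpow_eq_rpow_re_of_pos hx]

lemma norm_mellin_le_of_re_mem_Icc {f : ℝ → E} {a b : ℝ} (ha : MellinConvergent f a)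
    (hb : MellinConvergent f b) {s : ℂ} (hs : s.re ∈ Icc a b) :
    ‖mellin f s‖ ≤ ∫ x in Ioi 0, (x ^ (a - 1) * ‖f x‖ + x ^ (b - 1) * ‖f x‖) := by
  refine norm_integral_le_of_norm_le
    ((integrableOn_rpow_mul_norm_of_mellinConvergent ha).add
      (integrableOn_rpow_mul_norm_of_mellinConvergent hb))
    (ae_restrict_of_forall_mem measurableSet_Ioi fun x (hx : 0 < x) ↦ ?_)
  have hkernel : x ^ (s.re - 1) ≤ x ^ (a - 1) + x ^ (b - 1) :=
    rpow_le_rpow_add_rpow_of_mem_Icc hx ⟨by linarith [hs.1], by linarith [hs.2]⟩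
  rw [norm_smul, norm_cpow_eq_rpow_re_of_pos hx, sub_re, one_re, ← add_mul]
  exact mul_le_mul_of_nonneg_right hkernel (norm_nonneg _)

lemma WeakFEPair.exists_bound_norm_Λ₀ (P : WeakFEPair E) (a b : ℝ) :
    ∃ C, ∀ s : ℂ, s.re ∈ Icc a b → ‖P.Λ₀ s‖ ≤ C := by
  have hconv (c : ℝ) : MellinConvergent P.f_modif c := by
    have hP := P.isStrongFEPair_toStrongFEPair
    exact mellinConvergent_of_isBigO_rpow P.toStrongFEPair.hf_int (hP.hf_top (-(c + 1)))
      (by simp) (hP.hf_zero (-(c - 1))) (by simp)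
  exact ⟨_, fun s hs ↦ norm_mellin_le_of_re_mem_Icc (hconv a) (hconv b) hs⟩

end Mellin

lemma HurwitzZeta.exists_bound_norm_completedHurwitzZetaEven₀ (t : UnitAddCircle) (a b : ℝ) :
    ∃ C, ∀ s : ℂ, s.re ∈ Icc a b → ‖completedHurwitzZetaEven₀ t s‖ ≤ C := by
  obtain ⟨C, hC⟩ := (HurwitzZeta.hurwitzEvenFEPair t).exists_bound_norm_Λ₀ (a / 2) (b / 2)
  refine ⟨C / 2, fun s hs ↦ ?_⟩
  have hs2 : (s / 2).re ∈ Icc (a / 2) (b / 2) := by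
    rw [div_ofNat_re]
    exact ⟨by linarith [hs.1], by linarith [hs.2]⟩
  rw [completedHurwitzZetaEven₀, norm_div, Complex.norm_ofNat]
  exact div_le_div_of_nonneg_right (hC _ hs2) zero_le_two

theorem completedRiemannZeta_bounded_in_vertical_strips_general (a b : ℝ) :
    ∃ C > 0, ∀ s : ℂ, a ≤ s.re → s.re ≤ b → s ≠ 0 → s ≠ 1 →
      ‖completedRiemannZeta s + 1 / s + 1 / (1 - s)‖ ≤ C := by
  obtain ⟨C, hC⟩ := HurwitzZeta.exists_bound_norm_completedHurwitzZetaEven₀ 0 a b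
  refine ⟨max 1 C, one_pos.trans_le (le_max_left _ _), fun s ha hb _ _ ↦ ?_⟩
  have hξ₀ : completedRiemannZeta s + 1 / s + 1 / (1 - s) = completedRiemannZeta₀ s := by
    rw [completedRiemannZeta_eq]; ring
  rw [hξ₀]
  exact (hC s ⟨ha, hb⟩).trans (le_max_right _ _)

/-- Boundedness in vertical strips: `ξ(s) + 1/s + 1/(1−s)` is bounded on every
vertical strip `a ≤ Re(s) ≤ b` (away from the two poles of `ξ`). -/
theorem completedRiemannZeta_bounded_in_vertical_strips (a b : ℝ) (hab : a ≤ b) :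
    ∃ C > 0, ∀ s : ℂ, a ≤ s.re → s.re ≤ b → s ≠ 0 → s ≠ 1 →
      ‖completedRiemannZeta s + 1 / s + 1 / (1 - s)‖ ≤ C :=
  completedRiemannZeta_bounded_in_vertical_strips_general a b
end

section
/- The function s(s−1)ξ(s) (which extends to an entire function of s) is of order 1: for every ε > 0 there exists C > 0 such that for every complex s with s ∉ {0,1}, ‖s (s−1) ξ(s)‖ ≤ C · exp(‖s‖^{1+ε}). -/
/-!
Write `ξ₀(s) = ξ(s) + 1/s + 1/(1 - s)`, so that `s(s - 1)ξ(s) = s(s - 1)ξ₀(s) + 1`. Mathlib realises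
`ξ₀(s)` as half the Mellin transform at `s/2` of the modified theta kernel, which equals `θ(t) - 1`
for `t > 1` and `t^{-1/2}(θ(1/t) - 1)` for `t < 1`, and `|θ(t) - 1| ≤ 3e^{-t}` for `t ≥ 1`.
On `(0, 1]` the bound `e^{-1/t} ≤ n! tⁿ` kills the singularity of `t^{s/2 - 1}`, and on `(1, ∞)`
the integral is dominated by `Γ(n + 1) = n!`; hence `|ξ₀(s)| ≤ 3 n!` once `n ≥ |s|/2 + 3/2`.
Taking `n ≈ |s| + 2` gives `|s(s - 1)ξ(s)| ≤ 4(|s| + 3)^{|s| + 5} = O(exp(|s|^{1+ε}))`.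
-/

open MeasureTheory Set Filter Real Complex HurwitzZeta
open scoped Nat

lemma exp_neg_inv_le_factorial_mul_pow {t : ℝ} (ht : 0 < t) (n : ℕ) :
    rexp (-t⁻¹) ≤ n ! * t ^ n := by
  have h := Real.pow_div_factorial_le_exp t⁻¹ (inv_pos.2 ht).le n
  rw [Real.exp_neg, inv_le_comm₀ (exp_pos _) (by positivity), mul_inv, ← inv_pow]
  rwa [div_eq_mul_inv, mul_comm] at h

lemma eventually_add_mul_log_add_le_rpow {ε : ℝ} (hε : 0 < ε) :
    ∀ᶠ r : ℝ in atTop, (r + 5) * Real.log (r + 3) ≤ r ^ (1 + ε) := by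
  filter_upwards [eventually_ge_atTop 5,
    (tendsto_rpow_atTop (half_pos hε)).eventually_ge_atTop (8 / ε)] with r hr5 hrε
  have hr₀ : 0 < r := by linarith
  have hlog : Real.log (r + 3) ≤ 4 / ε * r ^ (ε / 2) :=
    calc Real.log (r + 3) ≤ Real.log (r ^ 2) := log_le_log (by positivity) (by nlinarith)
      _ = 2 * Real.log r := by rw [log_pow, Nat.cast_ofNat]
      _ ≤ 2 * (r ^ (ε / 2) / (ε / 2)) := by gcongr; exact log_le_rpow_div hr₀.le (half_pos hε)
      _ = 4 / ε * r ^ (ε / 2) := by field_simp; ring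
  calc (r + 5) * Real.log (r + 3) ≤ (2 * r) * (4 / ε * r ^ (ε / 2)) := by
        gcongr
        · exact log_nonneg (by linarith)
        · linarith
    _ = r * r ^ (ε / 2) * (8 / ε) := by ring
    _ ≤ r * r ^ (ε / 2) * r ^ (ε / 2) := by gcongr
    _ = r ^ (1 + ε) := by rw [mul_assoc, ← rpow_add hr₀, add_halves, rpow_add hr₀, rpow_one]

lemma exists_add_rpow_add_le_mul_exp_rpow {ε : ℝ} (hε : 0 < ε) :
    ∃ M > 0, ∀ r : ℝ, 0 ≤ r → (r + 3) ^ (r + 5) ≤ M * rexp (r ^ (1 + ε)) := by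
  obtain ⟨R, hR⟩ := eventually_atTop.1 (eventually_add_mul_log_add_le_rpow hε)
  set R₀ := max R 0
  have hR₀ : 0 ≤ R₀ := le_max_right R 0
  have hM : 1 ≤ (R₀ + 3) ^ (R₀ + 5) := one_le_rpow (by linarith) (by positivity)
  refine ⟨(R₀ + 3) ^ (R₀ + 5), by positivity, fun r hr => ?_⟩
  rcases le_total r R₀ with hrR | hRr
  · calc (r + 3) ^ (r + 5) ≤ (R₀ + 3) ^ (r + 5) := by gcongr
      _ ≤ (R₀ + 3) ^ (R₀ + 5) := rpow_le_rpow_of_exponent_le (by linarith) (by linarith)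
      _ ≤ _ := le_mul_of_one_le_right (by positivity) (one_le_exp (by positivity))
  · calc (r + 3) ^ (r + 5) = rexp ((r + 5) * Real.log (r + 3)) := by
          rw [rpow_def_of_pos (by positivity), mul_comm]
      _ ≤ rexp (r ^ (1 + ε)) := exp_le_exp.2 (hR r ((le_max_left R 0).trans hRr))
      _ ≤ _ := le_mul_of_one_le_left (by positivity) hM

lemma factorial_le_rpow_self {x : ℝ} {n : ℕ} (hx : 1 ≤ x) (hn : (n : ℝ) ≤ x) :
    (n ! : ℝ) ≤ x ^ x :=
  calc (n ! : ℝ) ≤ (n : ℝ) ^ n := by exact_mod_cast Nat.factorial_le_pow n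
    _ ≤ x ^ n := by gcongr
    _ = x ^ (n : ℝ) := (rpow_natCast x n).symm
    _ ≤ x ^ x := rpow_le_rpow_of_exponent_le hx hn

section Mellin

variable {E : Type*} [NormedAddCommGroup E] [NormedSpace ℂ E]

lemma norm_cpow_sub_one_smul {t : ℝ} (ht : 0 < t) (z : ℂ) (x : E) :
    ‖(t : ℂ) ^ (z - 1) • x‖ = t ^ (z.re - 1) * ‖x‖ := by
  rw [norm_smul, norm_cpow_eq_rpow_re_of_pos ht, sub_re, one_re]

lemma norm_setIntegral_Ioc_cpow_smul_le {f : ℝ → E} {z : ℂ} {K k : ℝ}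
    (hf : ∀ t ∈ Ioc (0 : ℝ) 1, ‖f t‖ ≤ K * t ^ (-k) * rexp (-t⁻¹))
    {n : ℕ} (hn : k + 1 - z.re ≤ n) :
    ‖∫ t in Ioc (0 : ℝ) 1, (t : ℂ) ^ (z - 1) • f t‖ ≤ K * n ! := by
  have hK : 0 ≤ K := by
    simpa [mul_nonneg_iff_of_pos_right (exp_pos _)] using
      (norm_nonneg _).trans (hf 1 (right_mem_Ioc.2 zero_lt_one))
  refine (norm_setIntegral_le_of_norm_le_const (C := K * n !) measure_Ioc_lt_top
    fun t ⟨ht₀, ht₁⟩ => ?_).trans (by simp)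
  rw [norm_cpow_sub_one_smul ht₀]
  calc t ^ (z.re - 1) * ‖f t‖ ≤ t ^ (z.re - 1) * (K * t ^ (-k) * (n ! * t ^ n)) := by
        refine mul_le_mul_of_nonneg_left ((hf t ⟨ht₀, ht₁⟩).trans ?_) (by positivity)
        exact mul_le_mul_of_nonneg_left (exp_neg_inv_le_factorial_mul_pow ht₀ n) (by positivity)
    _ = K * n ! * t ^ (z.re - 1 + -k + n) := by
        rw [rpow_add ht₀, rpow_add ht₀, rpow_natCast]
        ring
    _ ≤ K * n ! :=
        mul_le_of_le_one_right (by positivity) (rpow_le_one ht₀.le ht₁ (by linarith))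

lemma norm_setIntegral_Ioi_cpow_smul_le {f : ℝ → E} {z : ℂ} {K : ℝ}
    (hf : ∀ t ∈ Ioi (1 : ℝ), ‖f t‖ ≤ K * rexp (-t)) {n : ℕ} (hn : z.re - 1 ≤ n) :
    ‖∫ t in Ioi (1 : ℝ), (t : ℂ) ^ (z - 1) • f t‖ ≤ K * n ! := by
  have hK : 0 ≤ K :=
    nonneg_of_mul_nonneg_left ((norm_nonneg _).trans (hf 2 (by norm_num))) (exp_pos _)
  have hΓ : IntegrableOn (fun t => K * (rexp (-t) * t ^ ((n + 1 : ℝ) - 1))) (Ioi 0) :=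
    (Real.GammaIntegral_convergent (Nat.cast_add_one_pos n)).const_mul K
  have h_bound : ∀ t ∈ Ioi (1 : ℝ),
      ‖(t : ℂ) ^ (z - 1) • f t‖ ≤ K * (rexp (-t) * t ^ ((n + 1 : ℝ) - 1)) := fun t ht => by
    have ht₀ : 0 < t := zero_lt_one.trans ht
    rw [norm_cpow_sub_one_smul ht₀, add_sub_cancel_right, rpow_natCast]
    calc t ^ (z.re - 1) * ‖f t‖ ≤ t ^ n * (K * rexp (-t)) := by
          gcongr
          · exact (rpow_le_rpow_of_exponent_le (le_of_lt ht) hn).trans_eq (rpow_natCast t n)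
          · exact hf t ht
      _ = _ := by ring
  calc _ ≤ ∫ t in Ioi (1 : ℝ), K * (rexp (-t) * t ^ ((n + 1 : ℝ) - 1)) :=
        norm_integral_le_of_norm_le (hΓ.mono_set (Ioi_subset_Ioi zero_le_one))
          ((ae_restrict_iff' measurableSet_Ioi).2 (Eventually.of_forall h_bound))
    _ ≤ ∫ t in Ioi 0, K * (rexp (-t) * t ^ ((n + 1 : ℝ) - 1)) :=
        setIntegral_mono_set hΓ
          ((ae_restrict_iff' measurableSet_Ioi).2 (Eventually.of_forall fun t (ht : 0 < t) => by
            positivity))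
          (Ioi_subset_Ioi zero_le_one).eventuallyLE
    _ = K * n ! := by
        rw [integral_const_mul, ← Real.Gamma_eq_integral (Nat.cast_add_one_pos n),
          Real.Gamma_nat_eq_factorial]

lemma norm_mellin_le_two_mul_factorial {f : ℝ → E} {z : ℂ} {K k : ℝ}
    (hf : MellinConvergent f z)
    (hf_bot : ∀ t ∈ Ioc (0 : ℝ) 1, ‖f t‖ ≤ K * t ^ (-k) * rexp (-t⁻¹))
    (hf_top : ∀ t ∈ Ioi (1 : ℝ), ‖f t‖ ≤ K * rexp (-t))
    {n : ℕ} (hn_bot : k + 1 - z.re ≤ n) (hn_top : z.re - 1 ≤ n) :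
    ‖mellin f z‖ ≤ 2 * K * n ! := by
  rw [mellin, ← Ioc_union_Ioi_eq_Ioi zero_le_one, setIntegral_union (Ioc_disjoint_Ioi le_rfl)
    measurableSet_Ioi (hf.mono_set Ioc_subset_Ioi_self) (hf.mono_set (Ioi_subset_Ioi zero_le_one))]
  linarith [norm_add_le (∫ t in Ioc (0 : ℝ) 1, (t : ℂ) ^ (z - 1) • f t)
    (∫ t in Ioi (1 : ℝ), (t : ℂ) ^ (z - 1) • f t), norm_setIntegral_Ioc_cpow_smul_le hf_bot hn_bot,
    norm_setIntegral_Ioi_cpow_smul_le hf_top hn_top]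

end Mellin

lemma ofReal_evenKernel_zero (t : ℝ) : (evenKernel 0 t : ℂ) = jacobiTheta (I * t) := by
  simpa [jacobiTheta_eq_jacobiTheta₂] using evenKernel_def 0 t

lemma abs_evenKernel_zero_sub_one_le {t : ℝ} (ht : 1 ≤ t) :
    |evenKernel 0 t - 1| ≤ 3 * rexp (-t) := by
  have h := norm_jacobiTheta_sub_one_le (τ := I * t) (by simpa using zero_lt_one.trans_le ht)
  rw [← ofReal_evenKernel_zero, ← ofReal_one, ← ofReal_sub, norm_real, norm_eq_abs] at h
  simp only [mul_im, I_re, ofReal_im, mul_zero, I_im, ofReal_re, one_mul, zero_add] at h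
  have h_le_exp_neg : rexp (-π * t) ≤ rexp (-t) := exp_le_exp.2 (by nlinarith [pi_gt_three])
  have h_le_quarter : rexp (-π * t) ≤ 1 / 4 := by
    calc rexp (-π * t) ≤ rexp (-3) := exp_le_exp.2 (by nlinarith [pi_gt_three])
      _ ≤ 1 / 4 := by
        rw [Real.exp_neg, inv_le_comm₀ (exp_pos _) (by norm_num)]
        linarith [add_one_le_exp 3]
  calc |evenKernel 0 t - 1| ≤ 2 / (1 - rexp (-π * t)) * rexp (-π * t) := h
    _ ≤ 3 * rexp (-t) := by
      gcongr
      rw [div_le_iff₀ (by linarith)]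
      linarith

lemma hurwitzEvenFEPair_zero_f_modif_of_one_lt {t : ℝ} (ht : 1 < t) :
    (hurwitzEvenFEPair 0).f_modif t = ↑(evenKernel 0 t - 1) := by
  simp [WeakFEPair.f_modif, hurwitzEvenFEPair, ht, ht.le]

lemma hurwitzEvenFEPair_zero_f_modif_of_lt_one {t : ℝ} (ht₀ : 0 < t) (ht₁ : t < 1) :
    (hurwitzEvenFEPair 0).f_modif t = ↑(t ^ (-(1 / 2) : ℝ) * (evenKernel 0 t⁻¹ - 1)) := by
  have hfeq : evenKernel 0 t = t ^ (-(1 / 2) : ℝ) * evenKernel 0 t⁻¹ := by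
    rw [evenKernel_functional_equation, ← evenKernel_eq_cosKernel_of_zero, rpow_neg ht₀.le]
    simp
  simp [WeakFEPair.f_modif, hurwitzEvenFEPair, ht₁, ht₁.le, ht₀, hfeq, mul_sub]

lemma norm_hurwitzEvenFEPair_zero_f_modif_le_of_mem_Ioc {t : ℝ} (ht : t ∈ Ioc (0 : ℝ) 1) :
    ‖(hurwitzEvenFEPair 0).f_modif t‖ ≤
      3 * t ^ (-(1 / 2) : ℝ) * rexp (-t⁻¹) := by
  obtain ⟨ht₀, ht₁⟩ := ht
  rcases ht₁.lt_or_eq with ht₁ | rfl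
  · rw [hurwitzEvenFEPair_zero_f_modif_of_lt_one ht₀ ht₁, norm_real, norm_eq_abs, abs_mul,
      abs_of_nonneg (by positivity)]
    calc _ ≤ t ^ (-(1 / 2) : ℝ) * (3 * rexp (-t⁻¹)) := by
          gcongr
          exact abs_evenKernel_zero_sub_one_le ((one_le_inv₀ ht₀).2 ht₁.le)
      _ = _ := by ring
  · rw [show (hurwitzEvenFEPair 0).f_modif 1 = 0 by simp [WeakFEPair.f_modif], norm_zero]
    positivity

lemma norm_hurwitzEvenFEPair_zero_f_modif_le_of_mem_Ioi {t : ℝ} (ht : t ∈ Ioi (1 : ℝ)) :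
    ‖(hurwitzEvenFEPair 0).f_modif t‖ ≤ 3 * rexp (-t) := by
  rw [hurwitzEvenFEPair_zero_f_modif_of_one_lt ht, norm_real, norm_eq_abs]
  exact abs_evenKernel_zero_sub_one_le (le_of_lt ht)

lemma norm_completedRiemannZeta₀_le {s : ℂ} {n : ℕ} (hn : ‖s‖ / 2 + 3 / 2 ≤ n) :
    ‖completedRiemannZeta₀ s‖ ≤ 3 * n ! := by
  have hre := abs_le.1 ((abs_re_le_norm s).trans (by linarith : ‖s‖ ≤ 2 * (n - 3 / 2 : ℝ)))
  have hΛ₀ := norm_mellin_le_two_mul_factorial (f := (hurwitzEvenFEPair 0).f_modif)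
    ((hurwitzEvenFEPair 0).isStrongFEPair_toStrongFEPair.hasMellin (s / 2)).1
    (fun _ => norm_hurwitzEvenFEPair_zero_f_modif_le_of_mem_Ioc)
    (fun _ => norm_hurwitzEvenFEPair_zero_f_modif_le_of_mem_Ioi)
    (n := n) (by rw [div_ofNat_re]; linarith) (by rw [div_ofNat_re]; linarith)
  rw [completedRiemannZeta₀, completedHurwitzZetaEven₀, WeakFEPair.Λ₀, norm_div, Complex.norm_two]
  linarith [hΛ₀]

lemma mul_sub_one_mul_completedRiemannZeta {s : ℂ} (hs₀ : s ≠ 0) (hs₁ : s ≠ 1) :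
    s * (s - 1) * completedRiemannZeta s = s * (s - 1) * completedRiemannZeta₀ s + 1 := by
  have : 1 - s ≠ 0 := sub_ne_zero.2 hs₁.symm
  rw [completedRiemannZeta_eq]
  field_simp
  ring

lemma norm_mul_sub_one_mul_completedRiemannZeta₀_add_one_le (s : ℂ) :
    ‖s * (s - 1) * completedRiemannZeta₀ s + 1‖ ≤ 4 * (‖s‖ + 3) ^ (‖s‖ + 5) := by
  set r := ‖s‖
  have hr : 0 ≤ r := norm_nonneg s
  set n := ⌈r⌉₊ + 2
  have hn : r + 2 ≤ n ∧ (n : ℝ) ≤ r + 3 := by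
    constructor <;> push_cast [n] <;> linarith [Nat.le_ceil r, Nat.ceil_lt_add_one hr]
  have hpoly : ‖s * (s - 1)‖ ≤ (r + 3) ^ (2 : ℝ) := by
    rw [rpow_two, norm_mul]
    nlinarith [norm_sub_le s 1, norm_one (α := ℂ), norm_nonneg (s - 1)]
  have hzeta : ‖completedRiemannZeta₀ s‖ ≤ 3 * (r + 3) ^ (r + 3) :=
    (norm_completedRiemannZeta₀_le (n := n) (by linarith)).trans
      (by gcongr; exact factorial_le_rpow_self (by linarith) hn.2)
  have hone : 1 ≤ (r + 3) ^ (r + 5) := one_le_rpow (by linarith) (by linarith)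
  calc ‖s * (s - 1) * completedRiemannZeta₀ s + 1‖
      ≤ ‖s * (s - 1)‖ * ‖completedRiemannZeta₀ s‖ + 1 := by
        simpa [norm_mul] using norm_add_le (s * (s - 1) * completedRiemannZeta₀ s) 1
    _ ≤ (r + 3) ^ (2 : ℝ) * (3 * (r + 3) ^ (r + 3)) + 1 := by gcongr
    _ = 3 * (r + 3) ^ (r + 5) + 1 := by
        rw [mul_left_comm, ← rpow_add (by linarith), add_comm 2, add_assoc]
        norm_num
    _ ≤ 4 * (r + 3) ^ (r + 5) := by linarith

/-- The entire function `s(s−1)ξ(s)` is of order 1: for every `ε > 0` there is `C > 0`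
with `‖s(s−1)ξ(s)‖ ≤ C · exp(‖s‖^{1+ε})` for all `s ∉ {0,1}`. -/
theorem xi_of_order_one (ε : ℝ) (hε : 0 < ε) :
    ∃ C > 0, ∀ s : ℂ, s ≠ 0 → s ≠ 1 →
      ‖s * (s - 1) * completedRiemannZeta s‖ ≤ C * Real.exp (‖s‖ ^ (1 + ε)) := by
  obtain ⟨M, hM₀, hM⟩ := exists_add_rpow_add_le_mul_exp_rpow hε
  refine ⟨4 * M, by positivity, fun s hs₀ hs₁ => ?_⟩
  rw [mul_sub_one_mul_completedRiemannZeta hs₀ hs₁, mul_assoc 4 M]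
  exact (norm_mul_sub_one_mul_completedRiemannZeta₀_add_one_le s).trans
    (mul_le_mul_of_nonneg_left (hM ‖s‖ (norm_nonneg s)) zero_le_four)
end

section
/- The entire function s(s−1)ξ(s) is not of any order ρ < 1: for every real ρ < 1 there is no constant C > 0 such that ‖s (s−1) ξ(s)‖ ≤ C · exp(‖s‖^{ρ}) holds for all complex s ∉ {0,1}. -/
open Real Filter
open scoped Nat

/-- The entire function `s(s−1)ξ(s)` is not of any order `ρ < 1`. -/
theorem xi_not_of_order_lt_one (ρ : ℝ) (hρ : ρ < 1) :
    ¬ ∃ C > 0, ∀ s : ℂ, s ≠ 0 → s ≠ 1 →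
        ‖s * (s - 1) * completedRiemannZeta s‖ ≤ C * Real.exp (‖s‖ ^ ρ) := by
  rintro ⟨C, hC, hbd⟩
  set K : ℝ := C * π * Real.exp 2 with hK
  have hKpos : 0 < K := by positivity
  have key : ∀ n : ℕ, (n ! : ℝ) ≤ K * (π * Real.exp 2) ^ n := by
    intro n
    have hn0 : (0 : ℝ) ≤ (n : ℝ) := n.cast_nonneg
    set s : ℂ := ((2 * n + 2 : ℕ) : ℂ) with hs
    have hsre : 1 < s.re := by
      simp only [hs, Complex.natCast_re]
      push_cast
      linarith
    have hs0 : s ≠ 0 := Nat.cast_ne_zero.mpr (by omega)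
    have hs1 : s ≠ 1 := by
      rw [hs]
      exact_mod_cast (by omega : (2 * n + 2 : ℕ) ≠ 1)
    have hΛ := completedZeta_eq_tsum_of_one_lt_re hsre
    have hsum : Summable (fun k : ℕ => 1 / (k : ℝ) ^ (2 * n + 2)) :=
      Real.summable_one_div_nat_pow.mpr (by omega)
    have hT : (∑' k : ℕ, 1 / (k : ℂ) ^ s) =
        ((∑' k : ℕ, 1 / (k : ℝ) ^ (2 * n + 2) : ℝ) : ℂ) := by
      rw [Complex.ofReal_tsum]
      congr 1 with k
      rw [hs, Complex.cpow_natCast]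
      push_cast
      ring
    have hT1 : (1 : ℝ) ≤ ‖∑' k : ℕ, 1 / (k : ℂ) ^ s‖ := by
      rw [hT, Complex.norm_real]
      have h1 : (1 : ℝ) ≤ ∑' k : ℕ, 1 / (k : ℝ) ^ (2 * n + 2) := by
        have := Summable.le_tsum hsum 1 (fun k _ => by positivity)
        simpa using this
      exact le_trans h1 (le_abs_self _)
    have hGamma : Complex.Gamma (s / 2) = (n ! : ℂ) := by
      have h : s / 2 = (n : ℂ) + 1 := by rw [hs]; push_cast; ring
      rw [h, Complex.Gamma_nat_eq_factorial]
    have hpi : ‖(π : ℂ) ^ (-s / 2)‖ = (π ^ (n + 1))⁻¹ := by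
      have h2 : -s / 2 = -(((n + 1 : ℕ) : ℂ)) := by rw [hs]; push_cast; ring
      rw [h2, Complex.cpow_neg, Complex.cpow_natCast, norm_inv, norm_pow,
        Complex.norm_real, Real.norm_eq_abs, abs_of_pos pi_pos]
    have hnorm_s : ‖s‖ = (2 * n + 2 : ℝ) := by
      rw [hs, Complex.norm_natCast]; push_cast; ring
    have hnorm_s1 : ‖s - 1‖ = (2 * n + 1 : ℝ) := by
      have h : s - 1 = ((2 * n + 1 : ℕ) : ℂ) := by rw [hs]; push_cast; ring
      rw [h, Complex.norm_natCast]; push_cast; ring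
    have hlow : (π ^ (n + 1))⁻¹ * (n ! : ℝ) ≤ ‖s * (s - 1) * completedRiemannZeta s‖ := by
      rw [hΛ, hGamma, norm_mul, norm_mul, norm_mul, norm_mul, hpi, hnorm_s, hnorm_s1,
        Complex.norm_natCast]
      have hfac : (1 : ℝ) ≤ (n ! : ℝ) := Nat.one_le_cast.mpr n.factorial_pos
      have h1 : (1 : ℝ) ≤ 2 * (n : ℝ) + 2 := by linarith
      have h2 : (1 : ℝ) ≤ 2 * (n : ℝ) + 1 := by linarith
      calc (π ^ (n + 1))⁻¹ * (n ! : ℝ)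
          = 1 * 1 * ((π ^ (n + 1))⁻¹ * (n ! : ℝ) * 1) := by ring
        _ ≤ (2 * n + 2) * (2 * n + 1) * ((π ^ (n + 1))⁻¹ * (n ! : ℝ) *
              ‖∑' k : ℕ, 1 / (k : ℂ) ^ s‖) := by gcongr <;> positivity
    have hup := hbd s hs0 hs1
    have hexp : Real.exp (‖s‖ ^ ρ) ≤ Real.exp (2 * n + 2) := by
      apply Real.exp_le_exp.mpr
      rw [hnorm_s]
      calc (2 * (n : ℝ) + 2) ^ ρ ≤ (2 * (n : ℝ) + 2) ^ (1 : ℝ) :=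
            Real.rpow_le_rpow_of_exponent_le (by linarith) hρ.le
        _ = 2 * n + 2 := Real.rpow_one _
    have hchain : (π ^ (n + 1))⁻¹ * (n ! : ℝ) ≤ C * Real.exp (2 * n + 2) :=
      le_trans hlow (le_trans hup (by gcongr))
    have hπpow : (0 : ℝ) < π ^ (n + 1) := by positivity
    rw [inv_mul_le_iff₀ hπpow] at hchain
    calc (n ! : ℝ) ≤ π ^ (n + 1) * (C * Real.exp (2 * n + 2)) := hchain
      _ = K * (π * Real.exp 2) ^ n := by
          rw [hK, show (2 * (n : ℝ) + 2) = (n : ℝ) * 2 + 2 by ring, Real.exp_add,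
            Real.exp_nat_mul, mul_pow]
          ring
  have htend := FloorSemiring.tendsto_pow_div_factorial_atTop (K := ℝ) (π * Real.exp 2)
  have hlb : ∀ n : ℕ, K⁻¹ ≤ (π * Real.exp 2) ^ n / (n ! : ℝ) := by
    intro n
    rw [le_div_iff₀ (by exact_mod_cast n.factorial_pos), inv_mul_le_iff₀ hKpos]
    exact key n
  obtain ⟨n, hn⟩ := (htend.eventually_lt_const (by positivity : (0 : ℝ) < K⁻¹)).exists
  exact absurd (hlb n) (not_le.mpr hn)
end

section
/- Let a : ℕ → ℂ be a sequence (indexed by n ≥ 1) such that for every σ > 1 the series ∑_{n=1}^∞ |a_n| n^{-σ} converges, and suppose H : ℂ → ℂ is entire, satisfies H(s) = (s−1) ∑_{n=1}^∞ a_n n^{-s} for Re(s) > 1, is of finite order (there exist A, C > 0 with ‖H(s)‖ ≤ C·exp(‖s‖^A) for all s), and satisfies the functional equation: for all s with 0 < Re(s) < 1, π^{-s/2} Γ(s/2) · H(s)/(s−1) = π^{-(1-s)/2} Γ((1−s)/2) · H(1−s)/(−s). Then for all real a' ≤ b' there exists C' > 0 such that ‖π^{-s/2} Γ(s/2) ·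 H(s)/(s−1)‖ ≤ C' for every s with a' ≤ Re(s) ≤ b' and |Im(s)| ≥ 1. -/
/-!
Put `Λ(s) = Γℝ(s) H(s) / (s - 1)` with `Γℝ(s) = π^{-s/2} Γ(s/2)`, and
`ξ(s) = Γℝ(s + 2) H(s) = s (s - 1) Λ(s) / (2π)`. The functional equation says `ξ(1 - s) = ξ(s)`
on the critical strip, hence, by analytic continuation, on the plane slit along `(-∞, -2]` and
`[3, ∞)`, where both sides are holomorphic.

For `Re s ≥ 2` the Dirichlet series is bounded by its absolutely convergent value at `2`, and `Γℝ`
is bounded on vertical strips of the right half-plane, so `Λ` is bounded there; by the functional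
equation it is bounded on `Re s ≤ -1, Im s ≠ 0` too. On `-1 ≤ Re s ≤ 2` the function
`ξ(s) / ((s + 2)(3 - s))` is holomorphic, invariant under `s ↦ 1 - s`, bounded on the right edge
(hence on both), and grows at most like `exp (exp |Im s|)` since `H` has finite order, so
Phragmén–Lindelöf bounds it on the strip. Away from the real axis `Λ` is a bounded multiple of it.
-/

open Complex ComplexConjugate Set Filter Asymptotics

lemma Complex.norm_Gamma_le_Gamma_re {z : ℂ} (hz : 0 < z.re) : ‖Gamma z‖ ≤ Real.Gamma z.re := by
  rw [Gamma_eq_integral hz, Real.Gamma_eq_integral hz, GammaIntegral]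
  refine (MeasureTheory.norm_integral_le_integral_norm _).trans_eq ?_
  refine MeasureTheory.setIntegral_congr_fun measurableSet_Ioi fun x hx => ?_
  simp [norm_cpow_eq_rpow_re_of_pos hx, norm_exp]

lemma Complex.norm_Gammaℝ_le {a b : ℝ} (ha : 0 < a) {s : ℂ} (has : a ≤ s.re) (hsb : s.re ≤ b) :
    ‖Gammaℝ s‖ ≤ max (Real.Gamma (a / 2)) (Real.Gamma (b / 2)) := by
  have hs : 0 < (s / 2).re := by rw [div_ofNat_re]; linarith
  have hpi : ‖(Real.pi : ℂ) ^ (-s / 2)‖ ≤ 1 := by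
    rw [norm_cpow_eq_rpow_re_of_pos Real.pi_pos, neg_div, neg_re, div_ofNat_re]
    exact Real.rpow_le_one_of_one_le_of_nonpos (by linarith [Real.pi_gt_three]) (by linarith)
  calc ‖Gammaℝ s‖ ≤ 1 * Real.Gamma (s / 2).re := by
        rw [Gammaℝ_def, norm_mul]
        exact mul_le_mul hpi (norm_Gamma_le_Gamma_re hs) (norm_nonneg _) zero_le_one
    _ ≤ max (Real.Gamma (a / 2)) (Real.Gamma (b / 2)) := by
        rw [one_mul, div_ofNat_re]
        exact Real.convexOn_Gamma.le_max_of_mem_Icc (half_pos ha) (by simp; linarith)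
          ⟨by linarith, by linarith⟩

lemma Complex.differentiableAt_Gammaℝ {s : ℂ} (hs : s ∈ slitPlane) :
    DifferentiableAt ℂ Gammaℝ s := by
  have h : Gammaℝ s ≠ 0 := fun h => by
    obtain ⟨n, rfl⟩ := Gammaℝ_eq_zero_iff.mp h
    simp only [mem_slitPlane_iff, neg_re, neg_im, mul_re, mul_im] at hs
    norm_num at hs
    linarith [n.cast_nonneg (α := ℝ)]
  simpa [Pi.inv_def] using (differentiable_Gammaℝ_inv s).inv (inv_ne_zero h)

lemma norm_tsum_mul_cpow_neg_le (a : ℕ → ℂ) {σ : ℝ}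
    (ha : Summable fun n : ℕ => ‖a (n + 1)‖ * ((n : ℝ) + 1) ^ (-σ)) {s : ℂ} (hs : σ ≤ s.re) :
    ‖∑' n : ℕ, a (n + 1) * ((n : ℂ) + 1) ^ (-s)‖ ≤
      ∑' n : ℕ, ‖a (n + 1)‖ * ((n : ℝ) + 1) ^ (-σ) := by
  have hterm (n : ℕ) : ‖a (n + 1) * ((n : ℂ) + 1) ^ (-s)‖ ≤ ‖a (n + 1)‖ * ((n : ℝ) + 1) ^ (-σ) := by
    rw [norm_mul, show (n : ℂ) + 1 = ((n + 1 : ℝ) : ℂ) by push_cast; ring,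
      norm_cpow_eq_rpow_re_of_pos (by positivity), neg_re]
    gcongr
    exact le_add_of_nonneg_left n.cast_nonneg
  have hsum := ha.of_nonneg_of_le (fun n => norm_nonneg _) hterm
  exact (norm_tsum_le_tsum_norm hsum).trans (hsum.tsum_le_tsum hterm ha)

lemma isBigO_exp_exp_of_norm_le_exp_rpow {f : ℂ → ℂ} {A C : ℝ}
    (hf : ∀ z, ‖f z‖ ≤ C * Real.exp (‖z‖ ^ A)) (a b : ℝ) {c : ℝ} (hc : 0 < c) :
    f =O[comap (_root_.abs ∘ im) atTop ⊓ 𝓟 (re ⁻¹' Ioo a b)]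
      fun z => Real.exp (Real.exp (c * |z.im|)) := by
  set l := comap (_root_.abs ∘ im) atTop ⊓ 𝓟 (re ⁻¹' Ioo a b)
  have him : Tendsto (fun z : ℂ => |z.im|) l atTop := tendsto_comap.mono_left inf_le_left
  have hnorm : Tendsto (fun z : ℂ => ‖z‖) l atTop :=
    tendsto_atTop_mono (fun z => abs_im_le_norm z) him
  have hpow : ∀ᶠ z in l, ‖z‖ ^ A ≤ Real.exp (c / 2 * ‖z‖) := by
    filter_upwards [hnorm.eventually ((isLittleO_rpow_exp_pos_mul_atTop A
      (half_pos hc)).bound one_pos)] with z hz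
    rw [one_mul, Real.norm_eq_abs, Real.norm_eq_abs, abs_of_pos (Real.exp_pos _)] at hz
    exact (le_abs_self _).trans hz
  have hexp : (fun z => Real.exp (‖z‖ ^ A)) =O[l] fun z => Real.exp (Real.exp (c * |z.im|)) := by
    refine IsBigO.of_bound 1 ?_
    filter_upwards [hpow, him.eventually_ge_atTop (max |a| |b|),
      mem_inf_of_right (mem_principal_self _)] with z hz hzim hzre
    have hre : |z.re| ≤ max |a| |b| := abs_le_max_abs_abs hzre.1.le hzre.2.le
    have hz2 : ‖z‖ ≤ 2 * |z.im| := by linarith [norm_le_abs_re_add_abs_im z]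
    simp only [Real.norm_eq_abs, abs_of_pos (Real.exp_pos _), one_mul, Real.exp_le_exp]
    exact hz.trans (Real.exp_le_exp.mpr (by nlinarith))
  exact (IsBigO.of_bound C (Eventually.of_forall fun z => by
    simpa [Real.norm_eq_abs, abs_of_pos (Real.exp_pos _)] using hf z)).mono le_top |>.trans hexp

lemma isPreconnected_halfPlanes_union_strip {a b : ℝ} (hab : a < b) :
    IsPreconnected ({z : ℂ | 0 < z.im} ∪ {z | a < z.re ∧ z.re < b} ∪ {z | z.im < 0}) := by
  have hstrip : IsPreconnected {z : ℂ | a < z.re ∧ z.re < b} :=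
    ((convex_halfSpace_re_gt a).inter (convex_halfSpace_re_lt b)).isPreconnected
  refine ((convex_halfSpace_im_gt 0).isPreconnected.union ((a + b) / 2 + I) ?_ ?_ hstrip).union
    ((a + b) / 2 - I) ?_ ?_ (convex_halfSpace_im_lt 0).isPreconnected <;>
    simp only [mem_union, mem_ofPred_eq, add_re, add_im, sub_re, sub_im, I_re, I_im] <;>
    norm_num <;> constructor <;> linarith

namespace Hamburger

noncomputable def xi (H : ℂ → ℂ) (s : ℂ) : ℂ := Gammaℝ (s + 2) * H s

def slitDomain : Set ℂ := {z | 0 < z.im} ∪ {z | -2 < z.re ∧ z.re < 3} ∪ {z | z.im < 0}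

def FunctionalEquation (H : ℂ → ℂ) : Prop :=
  ∀ s : ℂ, 0 < s.re → s.re < 1 → Gammaℝ s * H s / (s - 1) = Gammaℝ (1 - s) * H (1 - s) / (-s)

variable {H : ℂ → ℂ}

lemma completed_eq_xi {s : ℂ} (hs : s ≠ 0) :
    Gammaℝ s * H s / (s - 1) = 2 * Real.pi * xi H s / (s * (s - 1)) := by
  have hpi : (Real.pi : ℂ) ≠ 0 := ofReal_ne_zero.mpr Real.pi_ne_zero
  rw [xi, Gammaℝ_add_two hs, mul_comm s, ← div_div, mul_div_assoc]
  field_simp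

lemma differentiableAt_xi (hH : Differentiable ℂ H) {s : ℂ} (hs : s + 2 ∈ slitPlane) :
    DifferentiableAt ℂ (xi H) s :=
  ((differentiableAt_Gammaℝ hs).comp s (differentiableAt_id.add_const 2)).mul (hH s)

lemma xi_one_sub_of_mem_criticalStrip (hFE : FunctionalEquation H) {s : ℂ} (h0 : 0 < s.re)
    (h1 : s.re < 1) : xi H (1 - s) = xi H s := by
  have hs0 : s ≠ 0 := fun h => by simp [h] at h0
  have hs1 : 1 - s ≠ 0 := fun h => by rw [sub_eq_zero] at h; simp [← h] at h1
  have hss : s * (s - 1) ≠ 0 := mul_ne_zero hs0 (by rwa [← neg_ne_zero, neg_sub])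
  have h := hFE s h0 h1
  rw [completed_eq_xi hs0, show -s = 1 - s - 1 by ring, completed_eq_xi hs1,
    show (1 - s) * (1 - s - 1) = s * (s - 1) by ring, div_left_inj' hss] at h
  exact (mul_left_cancel₀ (by simp [Real.pi_ne_zero]) h).symm

lemma xi_one_sub_eqOn (hH : Differentiable ℂ H) (hFE : FunctionalEquation H) :
    EqOn (fun s => xi H (1 - s)) (xi H) slitDomain := by
  have hU : IsOpen slitDomain :=
    ((isOpen_lt continuous_const continuous_im).union ((isOpen_lt continuous_const
      continuous_re).inter (isOpen_lt continuous_re continuous_const))).union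
      (isOpen_lt continuous_im continuous_const)
  have hslit (z : ℂ) (hz : z ∈ slitDomain) : z + 2 ∈ slitPlane ∧ 1 - z + 2 ∈ slitPlane := by
    simp only [slitDomain, mem_union, mem_ofPred_eq] at hz
    simp only [mem_slitPlane_iff, add_re, add_im, sub_re, sub_im, one_re, one_im, re_ofNat,
      im_ofNat]
    rcases hz with (h | h) | h
    · exact ⟨Or.inr (by linarith), Or.inr (by linarith)⟩
    · exact ⟨Or.inl (by linarith), Or.inl (by linarith)⟩
    · exact ⟨Or.inr (by linarith), Or.inr (by linarith)⟩
  have hxi : DifferentiableOn ℂ (xi H) slitDomain := fun z hz =>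
    (differentiableAt_xi hH (hslit z hz).1).differentiableWithinAt
  have hxi' : DifferentiableOn ℂ (fun s => xi H (1 - s)) slitDomain := fun z hz =>
    ((differentiableAt_xi hH (hslit z hz).2).comp z
      (differentiableAt_id.const_sub 1)).differentiableWithinAt
  have hstrip : IsOpen {z : ℂ | 0 < z.re ∧ z.re < 1} :=
    (isOpen_lt continuous_const continuous_re).inter (isOpen_lt continuous_re continuous_const)
  refine (hxi'.analyticOnNhd hU).eqOn_of_preconnected_of_eventuallyEq (hxi.analyticOnNhd hU)
    (isPreconnected_halfPlanes_union_strip (by norm_num)) (z₀ := 1 / 2) ?_ ?_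
  · simp only [slitDomain, mem_union, mem_ofPred_eq]; norm_num
  · filter_upwards [hstrip.mem_nhds (by norm_num)] with z hz
    exact xi_one_sub_of_mem_criticalStrip hFE hz.1 hz.2

lemma one_le_norm_mul_of_mem_strip {z : ℂ} (h1 : -1 ≤ z.re) (h2 : z.re ≤ 2) :
    1 ≤ ‖(z + 2) * (3 - z)‖ := by
  rw [norm_mul]
  refine one_le_mul_of_one_le_of_one_le ?_ ?_ <;> refine le_trans ?_ (re_le_norm _) <;>
    simp <;> linarith

lemma norm_xi_div_le_of_re_eq_two {M : ℝ} (hright : ∀ s : ℂ, 2 ≤ s.re → ‖H s‖ ≤ M * ‖s - 1‖)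
    {z : ℂ} (hz : z.re = 2) : ‖xi H z / ((z + 2) * (3 - z))‖ ≤ M := by
  have hz1 : 0 < ‖z - 1‖ := norm_pos_iff.mpr fun h => by
    simp [sub_eq_zero.mp h] at hz
  have hconj : 3 - z = conj (z - 1) := Complex.ext (by simp; linarith) (by simp)
  have hΓ : ‖Gammaℝ (z + 2)‖ ≤ 1 := by
    have h := norm_Gammaℝ_le (a := 4) (b := 4) (s := z + 2) (by norm_num)
      (by simp [hz]; norm_num) (by simp [hz]; norm_num)
    rwa [show (4 : ℝ) / 2 = 2 by norm_num, max_self, Real.Gamma_two] at h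
  have hz2 : 1 ≤ ‖z + 2‖ := le_trans (by simp [hz]; norm_num) (re_le_norm _)
  calc ‖xi H z / ((z + 2) * (3 - z))‖ = ‖Gammaℝ (z + 2)‖ * ‖H z‖ / (‖z + 2‖ * ‖z - 1‖) := by
        simp only [xi, norm_div, norm_mul, hconj, RCLike.norm_conj]
    _ ≤ 1 * ‖H z‖ / (1 * ‖z - 1‖) := by gcongr
    _ ≤ M := by
        rw [one_mul, one_mul]
        exact (div_le_iff₀ hz1).mpr (hright z hz.ge)

lemma norm_xi_div_le_of_mem_strip {A C M : ℝ} (hH : Differentiable ℂ H)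
    (hgrowth : ∀ s, ‖H s‖ ≤ C * Real.exp (‖s‖ ^ A))
    (hright : ∀ s : ℂ, 2 ≤ s.re → ‖H s‖ ≤ M * ‖s - 1‖) (hFE : FunctionalEquation H) {s : ℂ}
    (h1 : -1 ≤ s.re) (h2 : s.re ≤ 2) : ‖xi H s / ((s + 2) * (3 - s))‖ ≤ M := by
  set g : ℂ → ℂ := fun z => xi H z / ((z + 2) * (3 - z))
  have hdiff : DifferentiableOn ℂ g (closure (re ⁻¹' Ioo (-1) 2)) := by
    rw [closure_preimage_re, closure_Ioo (by norm_num)]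
    intro z ⟨hz1, hz2⟩
    refine ((differentiableAt_xi hH ?_).div (by fun_prop) ?_).differentiableWithinAt
    · exact mem_slitPlane_iff.mpr (Or.inl (by simp; linarith))
    · exact norm_pos_iff.mp (one_pos.trans_le (one_le_norm_mul_of_mem_strip hz1 hz2))
  have hgrowth_g : g =O[comap (_root_.abs ∘ im) atTop ⊓ 𝓟 (re ⁻¹' Ioo (-1) 2)]
      fun z => Real.exp (1 * Real.exp (1 * |z.im|)) := by
    have hbound : ∀ᶠ z in comap (_root_.abs ∘ im) atTop ⊓ 𝓟 (re ⁻¹' Ioo (-1) 2),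
        ‖g z‖ ≤ max (Real.Gamma (1 / 2)) (Real.Gamma (4 / 2)) * ‖H z‖ := by
      filter_upwards [mem_inf_of_right (mem_principal_self _)] with z ⟨hz1, hz2⟩
      rw [norm_div, xi, norm_mul]
      refine div_le_of_le_mul₀ (norm_nonneg _) (by positivity) ?_
      refine (le_mul_of_one_le_right (by positivity)
        (one_le_norm_mul_of_mem_strip hz1.le hz2.le)).trans' ?_
      gcongr
      exact norm_Gammaℝ_le one_pos (by simp; linarith) (by simp; linarith)
    simpa only [one_mul] using
      (IsBigO.of_bound _ hbound).trans (isBigO_exp_exp_of_norm_le_exp_rpow hgrowth (-1) 2 one_pos)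
  have hre_neg_one (z : ℂ) (hz : z.re = -1) : ‖g z‖ ≤ M := by
    have hsymm : g (1 - z) = g z := by
      simp only [g]
      rw [show xi H (1 - z) = xi H z from
        xi_one_sub_eqOn hH hFE (Or.inl (Or.inr ⟨by linarith, by linarith⟩))]
      congr 1; ring
    rw [← hsymm]
    exact norm_xi_div_le_of_re_eq_two hright (by simp [hz]; norm_num)
  have hc : (1 : ℝ) < Real.pi / (2 - -1) := by
    rw [lt_div_iff₀ (by norm_num)]; linarith [Real.pi_gt_three]
  exact PhragmenLindelof.vertical_strip (f := g) hdiff.diffContOnCl ⟨1, hc, 1, hgrowth_g⟩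
    hre_neg_one (fun z hz => norm_xi_div_le_of_re_eq_two hright hz) h1 h2

lemma norm_completed_le_of_two_le_re {M b : ℝ} (hright : ∀ s : ℂ, 2 ≤ s.re → ‖H s‖ ≤ M * ‖s - 1‖)
    {s : ℂ} (h2 : 2 ≤ s.re) (hb : s.re ≤ b) :
    ‖Gammaℝ s * H s / (s - 1)‖ ≤ max (Real.Gamma 1) (Real.Gamma (b / 2)) * M := by
  have hs1 : 0 < ‖s - 1‖ := norm_pos_iff.mpr fun h => by
    simp [sub_eq_zero.mp h] at h2
  have hΓ : ‖Gammaℝ s‖ ≤ max (Real.Gamma 1) (Real.Gamma (b / 2)) := by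
    simpa using norm_Gammaℝ_le two_pos h2 hb
  rw [norm_div, norm_mul, mul_div_assoc]
  exact mul_le_mul hΓ ((div_le_iff₀ hs1).mpr (hright s h2)) (by positivity)
    ((norm_nonneg _).trans hΓ)

lemma completed_one_sub (hH : Differentiable ℂ H) (hFE : FunctionalEquation H) {s : ℂ}
    (hs : s.im ≠ 0) : Gammaℝ (1 - s) * H (1 - s) / (1 - s - 1) = Gammaℝ s * H s / (s - 1) := by
  have hs0 : s ≠ 0 := fun h => hs (by simp [h])
  have hs1 : 1 - s ≠ 0 := fun h => hs (by simp [← sub_eq_zero.mp h])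
  have hmem : s ∈ slitDomain := by
    rcases hs.lt_or_gt with h | h
    · exact Or.inr h
    · exact Or.inl (Or.inl h)
  rw [completed_eq_xi hs1, completed_eq_xi hs0,
    show xi H (1 - s) = xi H s from xi_one_sub_eqOn hH hFE hmem]
  congr 1; ring

lemma norm_completed_le_of_mem_strip {A C M : ℝ} (hH : Differentiable ℂ H)
    (hgrowth : ∀ s, ‖H s‖ ≤ C * Real.exp (‖s‖ ^ A))
    (hright : ∀ s : ℂ, 2 ≤ s.re → ‖H s‖ ≤ M * ‖s - 1‖) (hFE : FunctionalEquation H) {s : ℂ}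
    (h1 : -1 ≤ s.re) (h2 : s.re ≤ 2) (him : 1 ≤ |s.im|) :
    ‖Gammaℝ s * H s / (s - 1)‖ ≤ 2 * Real.pi * (M * 9) := by
  have him0 : s.im ≠ 0 := fun h => by norm_num [h] at him
  have hs : 1 ≤ ‖s‖ := him.trans (abs_im_le_norm s)
  have hs1 : 1 ≤ ‖s - 1‖ := him.trans (by simpa using abs_im_le_norm (s - 1))
  have hs0 : s ≠ 0 := norm_pos_iff.mp (one_pos.trans_le hs)
  have hq : (s + 2) * (3 - s) ≠ 0 := mul_ne_zero (fun h => him0 (by simpa using congrArg im h))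
    (fun h => him0 (by simpa using congrArg im h))
  have hxi := norm_xi_div_le_of_mem_strip hH hgrowth hright hFE h1 h2
  have hratio : ‖(s + 2) * (3 - s) / (s * (s - 1))‖ ≤ 9 := by
    rw [norm_div, norm_mul, norm_mul, div_le_iff₀ (by positivity)]
    have h3 : ‖3 - s‖ ≤ ‖s - 1‖ + 2 := by
      rw [show 3 - s = 2 - (s - 1) by ring, add_comm]
      exact (norm_sub_le _ _).trans_eq (by norm_num)
    have h2' : ‖s + 2‖ ≤ ‖s‖ + 2 := (norm_add_le _ _).trans_eq (by norm_num)
    nlinarith [mul_le_mul h2' h3 (norm_nonneg _) (by positivity)]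
  rw [completed_eq_xi hs0, mul_div_assoc, ← div_mul_div_cancel₀ hq]
  calc ‖2 * Real.pi * (xi H s / ((s + 2) * (3 - s)) * ((s + 2) * (3 - s) / (s * (s - 1))))‖
      = 2 * Real.pi * (‖xi H s / ((s + 2) * (3 - s))‖ *
          ‖(s + 2) * (3 - s) / (s * (s - 1))‖) := by
        rw [norm_mul, norm_mul (xi H s / _)]
        simp [abs_of_pos Real.pi_pos]
    _ ≤ 2 * Real.pi * (M * 9) := by
        gcongr
        exact (norm_nonneg _).trans hxi

end Hamburger

open Hamburger

theorem hamburger_hypotheses_imply_bv_general (a : ℕ → ℂ)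
    (ha : ∀ σ : ℝ, 1 < σ → Summable fun n : ℕ => ‖a (n + 1)‖ * ((n : ℝ) + 1) ^ (-σ))
    (H : ℂ → ℂ) (hH : Differentiable ℂ H)
    (hHeq : ∀ s : ℂ, 1 < s.re →
      H s = (s - 1) * ∑' n : ℕ, a (n + 1) * ((n : ℂ) + 1) ^ (-s))
    (A C : ℝ)
    (hHbd : ∀ s : ℂ, ‖H s‖ ≤ C * Real.exp (‖s‖ ^ A))
    (hFE : ∀ s : ℂ, 0 < s.re → s.re < 1 →
      (Real.pi : ℂ) ^ (-s / 2) * Complex.Gamma (s / 2) * H s / (s - 1) =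
        (Real.pi : ℂ) ^ (-(1 - s) / 2) * Complex.Gamma ((1 - s) / 2) * H (1 - s) / (-s)) :
    ∀ a' b' : ℝ, a' ≤ b' → ∃ C' > 0, ∀ s : ℂ,
      a' ≤ s.re → s.re ≤ b' → 1 ≤ |s.im| →
        ‖(Real.pi : ℂ) ^ (-s / 2) * Complex.Gamma (s / 2) * H s / (s - 1)‖ ≤ C' := by
  intro a' b' _
  set M := ∑' n : ℕ, ‖a (n + 1)‖ * ((n : ℝ) + 1) ^ (-(2 : ℝ))
  have hright (s : ℂ) (hs : 2 ≤ s.re) : ‖H s‖ ≤ M * ‖s - 1‖ := by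
    rw [hHeq s (by linarith), norm_mul, mul_comm]
    gcongr
    exact norm_tsum_mul_cpow_neg_le a (ha 2 one_lt_two) hs
  set K := max (Real.Gamma 1) (Real.Gamma (max b' (1 - a') / 2)) * M
  refine ⟨max (max K (2 * Real.pi * (M * 9))) 1, one_pos.trans_le (le_max_right _ _),
    fun s h1 h2 him => le_max_of_le_left ?_⟩
  show ‖Gammaℝ s * H s / (s - 1)‖ ≤ _
  rcases le_or_gt 2 s.re with hs2 | hs2
  · exact le_max_of_le_left
      (norm_completed_le_of_two_le_re hright hs2 (h2.trans (le_max_left _ _)))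
  rcases le_or_gt (-1) s.re with hs1 | hs1
  · exact le_max_of_le_right (norm_completed_le_of_mem_strip hH hHbd hright hFE hs1 hs2.le him)
  · rw [← completed_one_sub hH hFE (fun h => by norm_num [h] at him)]
    refine le_max_of_le_left (norm_completed_le_of_two_le_re hright ?_ ?_) <;>
      simp only [sub_re, one_re] <;> linarith [le_max_right b' (1 - a')]

/-- Under the hypotheses of Hamburger's theorem (self-dual case), the completed
Dirichlet series `π^{-s/2} Γ(s/2) h(s) = π^{-s/2} Γ(s/2) H(s)/(s−1)` is bounded
in every vertical strip away from the real axis. -/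
theorem hamburger_hypotheses_imply_bv (a : ℕ → ℂ)
    (ha : ∀ σ : ℝ, 1 < σ → Summable fun n : ℕ => ‖a (n + 1)‖ * ((n : ℝ) + 1) ^ (-σ))
    (H : ℂ → ℂ) (hH : Differentiable ℂ H)
    (hHeq : ∀ s : ℂ, 1 < s.re →
      H s = (s - 1) * ∑' n : ℕ, a (n + 1) * ((n : ℂ) + 1) ^ (-s))
    (A C : ℝ) (hA : 0 < A) (hC : 0 < C)
    (hHbd : ∀ s : ℂ, ‖H s‖ ≤ C * Real.exp (‖s‖ ^ A))
    (hFE : ∀ s : ℂ, 0 < s.re → s.re < 1 →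
      (Real.pi : ℂ) ^ (-s / 2) * Complex.Gamma (s / 2) * H s / (s - 1) =
        (Real.pi : ℂ) ^ (-(1 - s) / 2) * Complex.Gamma ((1 - s) / 2) * H (1 - s) / (-s)) :
    ∀ a' b' : ℝ, a' ≤ b' → ∃ C' > 0, ∀ s : ℂ,
      a' ≤ s.re → s.re ≤ b' → 1 ≤ |s.im| →
        ‖(Real.pi : ℂ) ^ (-s / 2) * Complex.Gamma (s / 2) * H s / (s - 1)‖ ≤ C' :=
  hamburger_hypotheses_imply_bv_general a ha H hH hHeq A C hHbd hFE
end

section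
/- (Selberg's theorem on the Eisenstein series.) There exists a function G : ℍ × ℂ → ℂ such that: (i) for every z = x+iy ∈ ℍ, the function s ↦ G(z,s) is meromorphic on ℂ; (ii) for every z = x+iy ∈ ℍ and every s with Re(s) > 1, G(z,s) = (1/2) π^{-s} Γ(s) ∑_{(m,n) ∈ ℤ² \ {(0,0)}} y^s / |m z + n|^{2s}; and (iii) G(z,s) = G(z, 1−s) for all z ∈ ℍ and all s ∈ ℂ. -/
/-!
Write `Q_z(m, n) = |mz + n|² / y` and `θ_z(t) = ∑_p exp(-π t Q_z(p))`. Termwise, the Mellin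
transform of `θ_z - 1` is `∑_{p ≠ 0} π^{-s} Γ(s) Q_z(p)^{-s}`, twice the completed series.
Poisson summation in `n` gives `θ_z(1/t) = t θ_z(t)`, and `θ_z(t) - 1` decays exponentially since
`Q_z` is bounded below on `ℤ² ∖ 0`. So `(θ_z, θ_z)` is an FE-pair of weight 1, and Hecke's
argument (Mathlib's `WeakFEPair`) continues the Mellin transform meromorphically, with
`Λ(1 - s) = Λ(s)`.
-/

open Real Complex Filter Topology Asymptotics Set
open scoped UpperHalfPlane

noncomputable section

theorem WeakFEPair.meromorphicOn_Λ {E : Type*} [NormedAddCommGroup E] [NormedSpace ℂ E]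
    [CompleteSpace E] (P : WeakFEPair E) : MeromorphicOn P.Λ univ := fun s _ => by
  have := (P.differentiable_Λ₀.analyticAt s).meromorphicAt
  unfold WeakFEPair.Λ
  fun_prop

namespace NonHolomorphicEisenstein

lemma norm_vecCons_eq_norm (p : ℤ × ℤ) : ‖![p.1, p.2]‖ = ‖p‖ := by
  simp [EisensteinSeries.norm_eq_max_natAbs, Prod.norm_def, Int.norm_eq_abs]

lemma one_le_norm_of_ne_zero {p : ℤ × ℤ} (hp : p ≠ 0) : 1 ≤ ‖p‖ := by
  rcases p with ⟨m, n⟩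
  rw [Prod.norm_mk, Int.norm_eq_abs, Int.norm_eq_abs, ← Int.cast_abs, ← Int.cast_abs]
  rcases eq_or_ne m 0 with rfl | hm
  · exact le_max_of_le_right (by exact_mod_cast Int.one_le_abs (by simpa using hp))
  · exact le_max_of_le_left (by exact_mod_cast Int.one_le_abs hm)

lemma summable_norm_rpow_neg {k : ℝ} (hk : 2 < k) : Summable fun p : ℤ × ℤ => ‖p‖ ^ (-k) := by
  refine (finTwoArrowEquiv ℤ).summable_iff.mp ?_
  refine (EisensteinSeries.summable_one_div_norm_rpow hk).congr fun p => ?_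
  simp [EisensteinSeries.norm_eq_max_natAbs, Prod.norm_def, Int.norm_eq_abs]

lemma summable_exp_neg_pi_mul_int_sq {a : ℝ} (ha : 0 < a) :
    Summable fun n : ℤ => rexp (-π * n ^ 2 * a) := by
  simpa using (HurwitzZeta.hasSum_int_evenKernel 0 ha).summable

variable (z : ℍ)

def quadForm (p : ℤ × ℤ) : ℝ := ‖(p.1 : ℂ) * z + p.2‖ ^ 2 / z.im

@[simp] lemma quadForm_zero : quadForm z 0 = 0 := by simp [quadForm]

lemma quadForm_nonneg (p : ℤ × ℤ) : 0 ≤ quadForm z p :=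
  div_nonneg (sq_nonneg _) z.im_pos.le

lemma quadForm_mk (m n : ℤ) :
    quadForm z (m, n) = ((n + m * z.re) ^ 2 + (m * z.im) ^ 2) / z.im := by
  rw [quadForm, ← Complex.normSq_eq_norm_sq, Complex.normSq_apply]
  simp only [add_re, add_im, mul_re, mul_im, intCast_re, intCast_im, UpperHalfPlane.coe_re,
    UpperHalfPlane.coe_im]
  ring

def lowerConst : ℝ := EisensteinSeries.r z ^ 2 / z.im

lemma lowerConst_pos : 0 < lowerConst z :=
  div_pos (pow_pos (EisensteinSeries.r_pos z) 2) z.im_pos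

lemma lowerConst_mul_norm_sq_le (p : ℤ × ℤ) : lowerConst z * ‖p‖ ^ 2 ≤ quadForm z p := by
  rcases eq_or_ne p 0 with rfl | hp
  · simp
  have hv : ![p.1, p.2] ≠ 0 := fun h => hp (Prod.ext (congrFun h 0) (congrFun h 1))
  have h := EisensteinSeries.r_mul_max_le z hv
  rw [norm_vecCons_eq_norm] at h
  simp only [Matrix.cons_val_zero, Matrix.cons_val_one] at h
  rw [lowerConst, quadForm, div_mul_eq_mul_div, ← mul_pow]
  gcongr
  exact mul_nonneg (EisensteinSeries.r_pos z).le (norm_nonneg _)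

lemma lowerConst_le_quadForm {p : ℤ × ℤ} (hp : p ≠ 0) : lowerConst z ≤ quadForm z p :=
  calc lowerConst z = lowerConst z * 1 ^ 2 := by ring
    _ ≤ lowerConst z * ‖p‖ ^ 2 := by
      gcongr
      · exact (lowerConst_pos z).le
      · exact one_le_norm_of_ne_zero hp
    _ ≤ quadForm z p := lowerConst_mul_norm_sq_le z p

lemma quadForm_pos {p : ℤ × ℤ} (hp : p ≠ 0) : 0 < quadForm z p :=
  (lowerConst_pos z).trans_le (lowerConst_le_quadForm z hp)

lemma summable_quadForm_rpow_inv {σ : ℝ} (hσ : 1 < σ) :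
    Summable fun p => (quadForm z p ^ σ)⁻¹ := by
  refine ((summable_norm_rpow_neg (k := 2 * σ) (by linarith)).mul_left
    (lowerConst z ^ (-σ))).of_nonneg_of_le (fun p => by have := quadForm_nonneg z p; positivity)
    fun p => ?_
  rcases eq_or_ne p 0 with rfl | hp
  · simp [Real.zero_rpow (by linarith : σ ≠ 0), Real.zero_rpow (by linarith : -(2 * σ) ≠ 0)]
  have hnorm : 0 < ‖p‖ := norm_pos_iff.mpr hp
  calc (quadForm z p ^ σ)⁻¹ ≤ ((lowerConst z * ‖p‖ ^ 2) ^ σ)⁻¹ := by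
        have := lowerConst_pos z
        gcongr
        exact lowerConst_mul_norm_sq_le z p
    _ = lowerConst z ^ (-σ) * ‖p‖ ^ (-(2 * σ)) := by
        rw [Real.mul_rpow (lowerConst_pos z).le (by positivity), mul_inv,
          ← Real.rpow_neg (lowerConst_pos z).le, ← Real.rpow_natCast, ← Real.rpow_mul hnorm.le,
          ← Real.rpow_neg hnorm.le]
        norm_num

/-- From the summability of `Q_z^{-2}`, since `e^{-u} ≤ 2 / u²`. -/
lemma summable_exp_neg_quadForm {t : ℝ} (ht : 0 < t) :
    Summable fun p => rexp (-π * quadForm z p * t) := by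
  refine ((summable_quadForm_rpow_inv z one_lt_two).mul_left (2 / (π * t) ^ 2))
    |>.of_norm_bounded_eventually ?_
  filter_upwards [(Set.finite_singleton (0 : ℤ × ℤ)).compl_mem_cofinite] with p hp
  have hQ := quadForm_pos z hp
  have hu : 0 < π * quadForm z p * t := by positivity
  have h := Real.pow_div_factorial_le_exp (x := π * quadForm z p * t) hu.le 2
  rw [Real.norm_of_nonneg (Real.exp_pos _).le, Real.rpow_two, neg_mul, neg_mul, Real.exp_neg]
  rw [Nat.factorial_two, Nat.cast_two] at h
  calc (rexp (π * quadForm z p * t))⁻¹ ≤ ((π * quadForm z p * t) ^ 2 / 2)⁻¹ := by gcongr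
    _ = 2 / (π * t) ^ 2 * (quadForm z p ^ 2)⁻¹ := by field_simp

def theta (t : ℝ) : ℝ := ∑' p : ℤ × ℤ, rexp (-π * quadForm z p * t)

lemma hasSum_theta {t : ℝ} (ht : 0 < t) :
    HasSum (fun p => rexp (-π * quadForm z p * t)) (theta z t) :=
  (summable_exp_neg_quadForm z ht).hasSum

lemma hasSum_theta_sub_one {t : ℝ} (ht : 0 < t) :
    HasSum (fun p => if p = 0 then 0 else rexp (-π * quadForm z p * t)) (theta z t - 1) := by
  simpa using hasSum_ite_sub_hasSum (hasSum_theta z ht) 0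

lemma theta_sub_one_le {t : ℝ} (ht : 1 ≤ t) :
    theta z t - 1 ≤ rexp (-π * lowerConst z * (t - 1)) * (theta z 1 - 1) := by
  refine hasSum_le (fun p => ?_) (hasSum_theta_sub_one z (by linarith))
    ((hasSum_theta_sub_one z one_pos).mul_left _)
  split_ifs with hp
  · simp
  · rw [← Real.exp_add]
    have := mul_le_mul_of_nonneg_right (lowerConst_le_quadForm z hp) (sub_nonneg.mpr ht)
    gcongr
    nlinarith [Real.pi_pos]

lemma isBigO_theta_sub_one (r : ℝ) :
    (fun t => (theta z t : ℂ) - 1) =O[atTop] (· ^ r) := by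
  have hδ : 0 < π * lowerConst z := mul_pos Real.pi_pos (lowerConst_pos z)
  refine IsBigO.trans ?_ (isLittleO_exp_neg_mul_rpow_atTop hδ r).isBigO
  refine IsBigO.of_bound (rexp (π * lowerConst z) * (theta z 1 - 1)) ?_
  filter_upwards [eventually_ge_atTop 1] with t ht
  have hnonneg : 0 ≤ theta z t - 1 :=
    (hasSum_theta_sub_one z (by linarith)).nonneg fun p => by split_ifs <;> positivity
  rw [← ofReal_one, ← ofReal_sub, norm_real, Real.norm_of_nonneg hnonneg,
    Real.norm_of_nonneg (Real.exp_pos _).le]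
  calc theta z t - 1 ≤ rexp (-π * lowerConst z * (t - 1)) * (theta z 1 - 1) :=
        theta_sub_one_le z ht
    _ = rexp (π * lowerConst z) * (theta z 1 - 1) * rexp (-(π * lowerConst z) * t) := by
        rw [mul_right_comm (rexp _), ← Real.exp_add]
        congr 2
        ring

lemma continuousOn_theta : ContinuousOn (theta z) (Ioi 0) := by
  intro t ht
  have ht2 : 0 < t / 2 := half_pos ht
  have hcont : ContinuousOn (theta z) (Ioi (t / 2)) := by
    refine continuousOn_tsum (fun p => by fun_prop) (summable_exp_neg_quadForm z ht2)
      fun p u hu => ?_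
    rw [Real.norm_of_nonneg (Real.exp_pos _).le]
    have hQ := mul_nonneg Real.pi_pos.le (quadForm_nonneg z p)
    refine Real.exp_le_exp.mpr ?_
    nlinarith [hu.out]
  exact (hcont.continuousAt (Ioi_mem_nhds (half_lt_self ht))).continuousWithinAt

/-- Poisson summation in `n` turns `theta z t` into `√(y / t) * dualTheta z t`, and `dualTheta`
is visibly invariant under `(m, k, t) ↦ (k, m, 1 / t)`. -/
def dualTheta (t : ℝ) : ℂ :=
  ∑' q : ℤ × ℤ, cexp (2 * π * I * z.re * q.1 * q.2) *
    rexp (-π * z.im * (t * q.1 ^ 2 + q.2 ^ 2 / t))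

lemma dualTheta_inv (t : ℝ) : dualTheta z t⁻¹ = dualTheta z t := by
  rw [dualTheta, ← (Equiv.prodComm ℤ ℤ).tsum_eq]
  refine tsum_congr fun q => ?_
  simp only [Equiv.prodComm_apply, Prod.fst_swap, Prod.snd_swap, div_inv_eq_mul]
  ring_nf

lemma theta_eq_sqrt_mul_dualTheta {t : ℝ} (ht : 0 < t) :
    (theta z t : ℂ) = √(z.im / t) * dualTheta z t := by
  have hy := z.im_pos
  have hfiber_theta (m : ℤ) : HasSum (fun n : ℤ => rexp (-π * quadForm z (m, n) * t))
      (rexp (-π * m ^ 2 * (z.im * t)) * HurwitzZeta.evenKernel ((m : ℝ) * z.re) (t / z.im)) := by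
    refine ((HurwitzZeta.hasSum_int_evenKernel _ (div_pos ht hy)).mul_left _).congr_fun fun n => ?_
    rw [← Real.exp_add, quadForm_mk]
    congr 1
    field_simp
    ring
  have hfiber_dual (m : ℤ) : HasSum (fun k : ℤ => cexp (2 * π * I * z.re * m * k) *
        rexp (-π * z.im * (t * m ^ 2 + k ^ 2 / t)))
      (rexp (-π * m ^ 2 * (z.im * t)) * HurwitzZeta.cosKernel ((m : ℝ) * z.re) (z.im / t)) := by
    refine ((HurwitzZeta.hasSum_int_cosKernel _ (div_pos hy ht)).mul_left _).congr_fun fun k => ?_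
    rw [mul_left_comm, ← ofReal_mul, ← Real.exp_add]
    push_cast
    ring_nf
  have hsummable_dual : Summable fun q : ℤ × ℤ => cexp (2 * π * I * z.re * q.1 * q.2) *
      rexp (-π * z.im * (t * q.1 ^ 2 + q.2 ^ 2 / t)) := by
    refine Summable.of_norm (((summable_exp_neg_pi_mul_int_sq (mul_pos hy ht)).mul_of_nonneg
      (summable_exp_neg_pi_mul_int_sq (div_pos hy ht)) (fun _ => by positivity)
      (fun _ => by positivity)).congr fun q => ?_)
    have hphase : ‖cexp (2 * π * I * z.re * q.1 * q.2)‖ = 1 := by simp [Complex.norm_exp]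
    rw [norm_mul, hphase, one_mul, norm_real, Real.norm_of_nonneg (Real.exp_pos _).le,
      ← Real.exp_add]
    ring_nf
  have h_theta := ((hasSum_theta z ht).prod_fiberwise hfiber_theta)
  have h_dual := hsummable_dual.hasSum.prod_fiberwise hfiber_dual
  rw [← hasSum_ofReal] at h_theta
  -- the fibres over `m` agree by the functional equation of the Hurwitz kernels
  refine h_theta.unique ((h_dual.mul_left (√(z.im / t) : ℂ)).congr_fun fun m => ?_)
  rw [HurwitzZeta.evenKernel_functional_equation, one_div_div, ← Real.sqrt_eq_rpow,
    one_div, ← Real.sqrt_inv, inv_div]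
  push_cast
  ring

lemma theta_inv {t : ℝ} (ht : 0 < t) : theta z t⁻¹ = t * theta z t := by
  have hsqrt : √(z.im / t⁻¹) = t * √(z.im / t) :=
    calc √(z.im / t⁻¹) = √(t ^ 2 * (z.im / t)) := by congr 1; field_simp
      _ = t * √(z.im / t) := by rw [Real.sqrt_mul (sq_nonneg t), Real.sqrt_sq ht.le]
  apply ofReal_injective
  rw [theta_eq_sqrt_mul_dualTheta z (inv_pos.mpr ht), dualTheta_inv, hsqrt, ofReal_mul,
    ofReal_mul, theta_eq_sqrt_mul_dualTheta z ht, mul_assoc]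

def thetaFEPair : WeakFEPair ℂ where
  f t := theta z t
  g t := theta z t
  k := 1
  ε := 1
  f₀ := 1
  g₀ := 1
  hf_int := (continuous_ofReal.comp_continuousOn (continuousOn_theta z)).locallyIntegrableOn
    measurableSet_Ioi
  hg_int := (continuous_ofReal.comp_continuousOn (continuousOn_theta z)).locallyIntegrableOn
    measurableSet_Ioi
  hk := one_pos
  hε := one_ne_zero
  h_feq t ht := by simp [theta_inv z ht]
  hf_top := isBigO_theta_sub_one z
  hg_top := isBigO_theta_sub_one z

lemma thetaFEPair_symm : (thetaFEPair z).symm = thetaFEPair z := by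
  simp only [WeakFEPair.symm, thetaFEPair, inv_one]

lemma thetaFEPair_Λ_one_sub (s : ℂ) : (thetaFEPair z).Λ (1 - s) = (thetaFEPair z).Λ s := by
  have h := (thetaFEPair z).functional_equation s
  rwa [thetaFEPair_symm, show (thetaFEPair z).k = 1 from rfl,
    show (thetaFEPair z).ε = 1 from rfl, ofReal_one, one_smul] at h

lemma ofReal_quadForm_cpow (p : ℤ × ℤ) (s : ℂ) :
    (quadForm z p : ℂ) ^ s = (‖(p.1 : ℂ) * z + p.2‖ : ℂ) ^ (2 * s) / (z.im : ℂ) ^ s := by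
  rw [quadForm, ofReal_div, div_cpow_ofReal_nonneg (sq_nonneg _) z.im_pos.le, ofReal_pow, sq,
    mul_cpow_ofReal_nonneg (norm_nonneg _) (norm_nonneg _), cpow_ofNat_mul, sq]

lemma hasSum_Λ_thetaFEPair {s : ℂ} (hs : 1 < s.re) :
    HasSum (fun p : ℤ × ℤ => π ^ (-s) * Gamma s * if p ≠ 0 then
        (z.im : ℂ) ^ s / (‖(p.1 : ℂ) * z + p.2‖ : ℂ) ^ (2 * s) else 0)
      ((thetaFEPair z).Λ s) := by
  rw [← ((thetaFEPair z).hasMellin hs).2]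
  refine (hasSum_mellin_pi_mul (a := fun p => if p = 0 then 0 else 1) (q := quadForm z)
    (fun p => ?_) (by linarith) (fun t ht => ?_) ?_).congr_fun fun p => ?_
  · rcases eq_or_ne p 0 with rfl | hp
    · simp
    · exact Or.inr (quadForm_pos z hp)
  · have h := hasSum_ofReal.mpr (hasSum_theta_sub_one z ht)
    rw [ofReal_sub, ofReal_one] at h
    exact h.congr_fun fun p => by split_ifs <;> simp
  · refine (summable_quadForm_rpow_inv z hs).of_nonneg_of_le
      (fun p => div_nonneg (norm_nonneg _) (Real.rpow_nonneg (quadForm_nonneg z p) _))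
      fun p => ?_
    split_ifs <;> simp [Real.rpow_nonneg (quadForm_nonneg z p)]
  · rcases eq_or_ne p 0 with rfl | hp
    · simp
    · simp only [hp, ne_eq, not_false_eq_true, if_true, if_false, mul_one]
      rw [ofReal_quadForm_cpow, div_div_eq_mul_div, mul_div_assoc]

def completed (s : ℂ) : ℂ := (1 / 2 : ℂ) * (thetaFEPair z).Λ s

lemma meromorphicOn_completed : MeromorphicOn (completed z) univ := fun s _ => by
  have := (thetaFEPair z).meromorphicOn_Λ s trivial
  unfold completed
  fun_prop

lemma completed_eq_tsum {s : ℂ} (hs : 1 < s.re) :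
    completed z s = (1 / 2 : ℂ) * π ^ (-s) * Gamma s * ∑' p : ℤ × ℤ, if p ≠ 0 then
        (z.im : ℂ) ^ s / (‖(p.1 : ℂ) * z + p.2‖ : ℂ) ^ (2 * s) else 0 := by
  rw [completed, ← (hasSum_Λ_thetaFEPair z hs).tsum_eq, tsum_mul_left]
  ring

lemma completed_one_sub (s : ℂ) : completed z (1 - s) = completed z s := by
  rw [completed, completed, thetaFEPair_Λ_one_sub]

end NonHolomorphicEisenstein

end

/-- Selberg's theorem: the completed Eisenstein series
`ξ(2s) E(z,s) = (1/2) π^{-s} Γ(s) ∑_{(m,n)≠(0,0)} y^s/|mz+n|^{2s}` admits a meromorphic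
continuation in `s` to all of `ℂ` and satisfies the functional equation `s ↦ 1−s`. -/
theorem selberg_eisenstein_continuation :
    ∃ G : UpperHalfPlane → ℂ → ℂ,
      (∀ z : UpperHalfPlane, MeromorphicOn (G z) Set.univ) ∧
      (∀ z : UpperHalfPlane, ∀ s : ℂ, 1 < s.re →
        G z s = (1 / 2 : ℂ) * (Real.pi : ℂ) ^ (-s) * Complex.Gamma s *
          ∑' p : ℤ × ℤ, if p ≠ 0 then
            ((z.im : ℂ) ^ s /
              (((‖(p.1 : ℂ) * (z : ℂ) + (p.2 : ℂ)‖ : ℝ) : ℂ)) ^ (2 * s))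
          else 0) ∧
      (∀ z : UpperHalfPlane, ∀ s : ℂ, G z s = G z (1 - s)) := by
  open NonHolomorphicEisenstein in
  exact ⟨completed, meromorphicOn_completed, fun z _ hs => completed_eq_tsum z hs,
    fun z s => (completed_one_sub z s).symm⟩
end
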